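/- arXiv:0812.0033 — 3 statements merged into one kernel-verified Lean document; each statement's English description precedes it below -/
import Mathlib

section
/- Let $(X_k)_{k \in \mathbb{N}}$ and $(Y_k)_{k \in \mathbb{N}}$ be sequences of positive random variables, both bounded in probability, and let $U:(0,\infty) \to \mathbb{R}$ be strictly concave. Suppose there is a constant $u^* \in \mathbb{R}$ with $\mathbb{E}[U((X_k + Y_k)/2)] \leq u^*$ for all $k$, and $\lim_{k\to\infty} \mathbb{E}[U(X_k)] = \lim_{k\to\infty} \mathbb{E}[U(Y_k)] = u^*$. If moreover $(1/X_k)_k$ and $(1/Y_k)_k$ are bounded in probability, then $|X_k - Y_k| \to 0$ in probability. -/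
open MeasureTheory Filter Set
open scoped Topology ENNReal

noncomputable section

/-- Uniform convergence on compact time intervals, in probability (ucp). -/
def UcpTendsto {Ω ι : Type*} [MeasurableSpace Ω] (μ : Measure Ω) (l : Filter ι)
    (F : ι → ℝ → Ω → ℝ) (G : ℝ → Ω → ℝ) : Prop :=
  ∀ T : ℝ, TendstoInMeasure μ
    (fun n ω => ⨆ t ∈ Icc (0 : ℝ) T, |F n t ω - G t ω|) l (fun _ => (0 : ℝ))

/-- All paths are right-continuous. -/
def RightCont {Ω : Type*} (X : ℝ → Ω → ℝ) : Prop :=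
  ∀ ω t, ContinuousWithinAt (fun s => X s ω) (Ici t) t

/-- `Xm` is the process of left limits of `X`. -/
def HasLeftLimits {Ω : Type*} (X Xm : ℝ → Ω → ℝ) : Prop :=
  ∀ ω t, Tendsto (fun s => X s ω) (𝓝[<] t) (𝓝 (Xm t ω))

/-- Local martingale: there is a localizing sequence of stopping times. -/
def IsLocalMartingale {Ω : Type*} {m0 : MeasurableSpace Ω} (ℱ : Filtration ℝ m0)
    (μ : Measure Ω) (M : ℝ → Ω → ℝ) : Prop :=
  ∃ τ : ℕ → Ω → ℝ, (∀ n, IsStoppingTime ℱ (fun ω => ((τ n ω : ℝ) : WithTop ℝ))) ∧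
    (∀ ω, Tendsto (fun n => τ n ω) atTop atTop) ∧
    ∀ n, Martingale (fun t ω => M (min t (τ n ω)) ω) ℱ μ

/-- Semimartingale: adapted càdlàg process that is the sum of a local martingale and an
adapted process of finite variation on compacts. -/
def IsSemimartingale {Ω : Type*} {m0 : MeasurableSpace Ω} (ℱ : Filtration ℝ m0)
    (μ : Measure Ω) (X : ℝ → Ω → ℝ) : Prop :=
  Adapted ℱ X ∧ RightCont X ∧ (∃ Xm, HasLeftLimits X Xm) ∧
    ∃ M A : ℝ → Ω → ℝ, IsLocalMartingale ℱ μ M ∧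
      (∀ ω a b, BoundedVariationOn (fun s => A s ω) (Icc a b)) ∧
      ∀ t ω, X t ω = X 0 ω + M t ω + A t ω

/-- Discrete quadratic-variation sums along the dyadic partition of mesh `2⁻ⁿ` of `[0, n]`,
stopped at time `t`. -/
def qvApprox {Ω : Type*} (X : ℝ → Ω → ℝ) (n : ℕ) (t : ℝ) (ω : Ω) : ℝ :=
  ∑ j ∈ Finset.range (n * 2 ^ n),
    (X (min (((j : ℝ) + 1) / 2 ^ n) t) ω - X (min ((j : ℝ) / 2 ^ n) t) ω) ^ 2

/-- `Q` is (a version of) the quadratic variation `[X, X]` (without the initial square). -/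
def IsQuadVar {Ω : Type*} [MeasurableSpace Ω] (μ : Measure Ω) (X Q : ℝ → Ω → ℝ) : Prop :=
  UcpTendsto μ atTop (fun n => qvApprox X n) Q

/-- Riemann sums of the (right limit of the) integrand `ηp` against `S` along dyadic
partitions, stopped at `t`. -/
def riemannApprox {Ω : Type*} (ηp S : ℝ → Ω → ℝ) (n : ℕ) (t : ℝ) (ω : Ω) : ℝ :=
  ∑ j ∈ Finset.range (n * 2 ^ n),
    ηp ((j : ℝ) / 2 ^ n) ω *
      (S (min (((j : ℝ) + 1) / 2 ^ n) t) ω - S (min ((j : ℝ) / 2 ^ n) t) ω)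

/-- `I` is (a version of) the Itô stochastic integral `∫₀· η dS`, characterized as the ucp
limit of Riemann sums along deterministic dyadic partitions; here `ηp` is the process of
right limits of the càglàd integrand `η`. -/
def IsStochInt {Ω : Type*} [MeasurableSpace Ω] (μ : Measure Ω) (ηp S I : ℝ → Ω → ℝ) : Prop :=
  UcpTendsto μ atTop (fun n => riemannApprox ηp S n) I

/-- Sum of `g` over the (at most countably many nontrivial) times in `(0, t]`. -/
def jumpSum {Ω : Type*} (g : ℝ → Ω → ℝ) (t : ℝ) (ω : Ω) : ℝ :=
  ∑' s : Ioc (0 : ℝ) t, g (s : ℝ) ω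

/-- The Doléans-Dade stochastic exponential of a semimartingale `Y` (with `Y₀ = 0`,
left limits `Ym` and quadratic variation `Q`), expressed through the closed-form formula
`ℰ(Y) = exp(Y - ½[Y,Y]ᶜ - Σ_{s≤·} (ΔY_s - log(1+ΔY_s)))`, valid when `ΔY > -1`. -/
def stochExp {Ω : Type*} (Y Ym Q : ℝ → Ω → ℝ) (t : ℝ) (ω : Ω) : ℝ :=
  Real.exp (Y t ω
    - (1 / 2) * (Q t ω - jumpSum (fun s ω' => (Y s ω' - Ym s ω') ^ 2) t ω)
    - jumpSum (fun s ω' => (Y s ω' - Ym s ω') - Real.log (1 + (Y s ω' - Ym s ω'))) t ω)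

end

/-- A sequence of real random variables is bounded in probability. -/
def BddInProb {Ω : Type*} [MeasurableSpace Ω] (μ : Measure Ω) (X : ℕ → Ω → ℝ) : Prop :=
  ∀ δ : ℝ, 0 < δ → ∃ M : ℝ, ∀ k, (μ {ω | M < |X k ω|}).toReal ≤ δ

/-! The expected midpoint concavity gap `E[U((X+Y)/2)] - (E[U(X)] + E[U(Y)])/2` is squeezed
between `0` and `u* - (E[U(X)] + E[U(Y)])/2 → 0`, so by Markov's inequality the gap itself tends
to `0` in probability. Boundedness in probability of `X`, `Y` and of their reciprocals keeps both,
outside an event of small probability, in a compact interval `[M⁻¹, M] ⊆ (0, ∞)`; there strict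
concavity and compactness give a gap of at least some `η > 0` whenever `|X - Y| ≥ ε`. -/

noncomputable def midpointGap (U : ℝ → ℝ) (x y : ℝ) : ℝ :=
  U ((x + y) / 2) - (U x + U y) / 2

section MidpointGap

variable {s : Set ℝ} {U : ℝ → ℝ} {x y : ℝ}

theorem Convex.add_div_two_mem (hs : Convex ℝ s) (hx : x ∈ s) (hy : y ∈ s) :
    (x + y) / 2 ∈ s := by
  simpa [midpoint_eq_smul_add, div_eq_inv_mul] using hs.midpoint_mem hx hy

theorem half_smul_add_half_smul : (1 / 2 : ℝ) • x + (1 / 2 : ℝ) • y = (x + y) / 2 := by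
  simp only [smul_eq_mul]
  ring

theorem ConcaveOn.midpointGap_nonneg (hU : ConcaveOn ℝ s U) (hx : x ∈ s) (hy : y ∈ s) :
    0 ≤ midpointGap U x y := by
  have h := hU.2 hx hy (by norm_num : (0 : ℝ) ≤ 1 / 2) (by norm_num : (0 : ℝ) ≤ 1 / 2)
    (by norm_num)
  simp only [half_smul_add_half_smul] at h
  unfold midpointGap
  linarith

theorem StrictConcaveOn.midpointGap_pos (hU : StrictConcaveOn ℝ s U) (hx : x ∈ s) (hy : y ∈ s)
    (hxy : x ≠ y) : 0 < midpointGap U x y := by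
  have h := hU.2 hx hy hxy (by norm_num : (0 : ℝ) < 1 / 2) (by norm_num : (0 : ℝ) < 1 / 2)
    (by norm_num)
  simp only [half_smul_add_half_smul] at h
  unfold midpointGap
  linarith

theorem StrictConcaveOn.exists_pos_le_midpointGap (hU : StrictConcaveOn ℝ s U) (hs : IsOpen s)
    {K : Set ℝ} (hK : IsCompact K) (hKs : K ⊆ s) {ε : ℝ} (hε : 0 < ε) :
    ∃ η > 0, ∀ x ∈ K, ∀ y ∈ K, ε ≤ |x - y| → η ≤ midpointGap U x y := by
  set S : Set (ℝ × ℝ) := (K ×ˢ K) ∩ {p | ε ≤ |p.1 - p.2|}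
  have hS : IsCompact S := (hK.prod hK).inter_right
    (isClosed_le continuous_const (continuous_fst.sub continuous_snd).abs)
  have hUc : ContinuousOn U s := hU.concaveOn.continuousOn hs
  have hgap : ContinuousOn (fun p : ℝ × ℝ => midpointGap U p.1 p.2) S := by
    exact (hUc.comp (by fun_prop) fun p hp => hU.1.add_div_two_mem (hKs hp.1.1) (hKs hp.1.2)).sub
      (((hUc.comp continuousOn_fst fun p hp => hKs hp.1.1).add
        (hUc.comp continuousOn_snd fun p hp => hKs hp.1.2)).div_const 2)
  obtain ⟨η, hη, hle⟩ := hS.exists_forall_le' hgap fun p hp =>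
    hU.midpointGap_pos (hKs hp.1.1) (hKs hp.1.2) fun h => by
      have : ε ≤ |p.1 - p.2| := hp.2
      rw [h, sub_self, abs_zero] at this
      linarith
  exact ⟨η, hη, fun x hx y hy hxy => hle (x, y) ⟨⟨hx, hy⟩, hxy⟩⟩

end MidpointGap

section Probability

variable {Ω : Type*} [MeasurableSpace Ω] {μ : Measure Ω} [IsFiniteMeasure μ]

theorem BddInProb.eventually_measure_lt_abs_le {X : ℕ → Ω → ℝ} (hX : BddInProb μ X)
    {δ : ℝ≥0∞} (hδ : 0 < δ) : ∀ᶠ M in atTop, ∀ k, μ {ω | M < |X k ω|} ≤ δ := by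
  rcases eq_or_ne δ ∞ with rfl | hδ_top
  · exact Eventually.of_forall fun _ _ => le_top
  obtain ⟨M₀, hM₀⟩ := hX δ.toReal (ENNReal.toReal_pos hδ.ne' hδ_top)
  filter_upwards [eventually_ge_atTop M₀] with M hM k
  calc μ {ω | M < |X k ω|} ≤ μ {ω | M₀ < |X k ω|} := measure_mono fun ω h => hM.trans_lt h
    _ ≤ δ := (ENNReal.toReal_le_toReal (measure_ne_top _ _) hδ_top).1 (hM₀ k)

theorem BddInProb.eventually_measure_notMem_Icc_le {X : ℕ → Ω → ℝ} (hX : BddInProb μ X)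
    (hXinv : BddInProb μ fun k ω => (X k ω)⁻¹) (hXpos : ∀ k ω, 0 < X k ω) {δ : ℝ≥0∞}
    (hδ : 0 < δ) : ∀ᶠ M in atTop, ∀ k, μ {ω | X k ω ∉ Icc M⁻¹ M} ≤ δ := by
  have hδ2 : 0 < δ / 2 := ENNReal.half_pos hδ.ne'
  filter_upwards [eventually_gt_atTop 0, hX.eventually_measure_lt_abs_le hδ2,
    hXinv.eventually_measure_lt_abs_le hδ2] with M hM hXM hXinvM k
  have hsub : {ω | X k ω ∉ Icc M⁻¹ M} ⊆ {ω | M < |(X k ω)⁻¹|} ∪ {ω | M < |X k ω|} := by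
    intro ω (hω : X k ω ∉ Icc M⁻¹ M)
    have hx := hXpos k ω
    show M < |(X k ω)⁻¹| ∨ M < |X k ω|
    rw [abs_of_pos hx, abs_of_pos (inv_pos.2 hx), lt_inv_comm₀ hM hx]
    rw [mem_Icc, not_and_or, not_le, not_le] at hω
    exact hω
  calc μ {ω | X k ω ∉ Icc M⁻¹ M} ≤ μ ({ω | M < |(X k ω)⁻¹|} ∪ {ω | M < |X k ω|}) :=
        measure_mono hsub
    _ ≤ δ / 2 + δ / 2 := (measure_union_le _ _).trans (add_le_add (hXinvM k) (hXM k))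
    _ = δ := ENNReal.add_halves δ

theorem tendsto_measure_le_of_tendsto_integral {ι : Type*} {l : Filter ι} {f : ι → Ω → ℝ}
    (hf : ∀ i, 0 ≤ᵐ[μ] f i) (hfi : ∀ i, Integrable (f i) μ)
    (h : Tendsto (fun i => ∫ ω, f i ω ∂μ) l (𝓝 0)) {η : ℝ} (hη : 0 < η) :
    Tendsto (fun i => μ {ω | η ≤ f i ω}) l (𝓝 0) := by
  have hmarkov : ∀ i, μ {ω | η ≤ f i ω} ≤ ENNReal.ofReal ((∫ ω, f i ω ∂μ) / η) := fun i => by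
    rw [← ofReal_measureReal (measure_ne_top _ _)]
    exact ENNReal.ofReal_le_ofReal
      ((le_div_iff₀' hη).2 (mul_meas_ge_le_integral_of_nonneg (hf i) (hfi i) η))
  have hbound : Tendsto (fun i => ENNReal.ofReal ((∫ ω, f i ω ∂μ) / η)) l (𝓝 0) := by
    simpa using ENNReal.tendsto_ofReal (h.div_const η)
  exact tendsto_of_tendsto_of_tendsto_of_le_of_le tendsto_const_nhds hbound
    (fun _ => zero_le) hmarkov

end Probability

theorem tendsto_integral_midpointGap {Ω ι : Type*} [MeasurableSpace Ω] {μ : Measure Ω}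
    {l : Filter ι} {U : ℝ → ℝ} {X Y : ι → Ω → ℝ} {u : ℝ}
    (hgap : ∀ i, 0 ≤ᵐ[μ] fun ω => midpointGap U (X i ω) (Y i ω))
    (hIX : ∀ i, Integrable (fun ω => U (X i ω)) μ)
    (hIY : ∀ i, Integrable (fun ω => U (Y i ω)) μ)
    (hIM : ∀ i, Integrable (fun ω => U ((X i ω + Y i ω) / 2)) μ)
    (hmid : ∀ i, ∫ ω, U ((X i ω + Y i ω) / 2) ∂μ ≤ u)
    (hX : Tendsto (fun i => ∫ ω, U (X i ω) ∂μ) l (𝓝 u))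
    (hY : Tendsto (fun i => ∫ ω, U (Y i ω) ∂μ) l (𝓝 u)) :
    Tendsto (fun i => ∫ ω, midpointGap U (X i ω) (Y i ω) ∂μ) l (𝓝 0) := by
  have hintegral : ∀ i, ∫ ω, midpointGap U (X i ω) (Y i ω) ∂μ =
      ∫ ω, U ((X i ω + Y i ω) / 2) ∂μ - (∫ ω, U (X i ω) ∂μ + ∫ ω, U (Y i ω) ∂μ) / 2 := fun i => by
    have hsum : Integrable (fun ω => (U (X i ω) + U (Y i ω)) / 2) μ :=
      ((hIX i).add (hIY i)).div_const 2
    simp only [midpointGap]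
    rw [integral_sub (hIM i) hsum, integral_div, integral_add (hIX i) (hIY i)]
  have hdeficit : Tendsto (fun i => u - (∫ ω, U (X i ω) ∂μ + ∫ ω, U (Y i ω) ∂μ) / 2) l (𝓝 0) := by
    have h := (tendsto_const_nhds (x := u)).sub ((hX.add hY).div_const 2)
    rwa [add_self_div_two, sub_self] at h
  refine tendsto_of_tendsto_of_tendsto_of_le_of_le tendsto_const_nhds hdeficit
    (fun i => integral_nonneg_of_ae (hgap i)) fun i => ?_
  rw [hintegral i]
  linarith [hmid i]

theorem measure_le_abs_sub_le_add {Ω : Type*} [MeasurableSpace Ω] (μ : Measure Ω)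
    {U : ℝ → ℝ} {K : Set ℝ} {ε η : ℝ}
    (hgap : ∀ x ∈ K, ∀ y ∈ K, ε ≤ |x - y| → η ≤ midpointGap U x y) (X Y : Ω → ℝ) :
    μ {ω | ε ≤ |X ω - Y ω|} ≤
      μ {ω | η ≤ midpointGap U (X ω) (Y ω)} + μ {ω | X ω ∉ K} + μ {ω | Y ω ∉ K} := by
  have hsub : {ω | ε ≤ |X ω - Y ω|} ⊆
      {ω | η ≤ midpointGap U (X ω) (Y ω)} ∪ {ω | X ω ∉ K} ∪ {ω | Y ω ∉ K} := by
    intro ω (hω : ε ≤ |X ω - Y ω|)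
    by_cases hx : X ω ∈ K
    · by_cases hy : Y ω ∈ K
      · exact Or.inl (Or.inl (hgap _ hx _ hy hω))
      · exact Or.inr hy
    · exact Or.inl (Or.inr hx)
  exact (measure_mono hsub).trans ((measure_union_le _ _).trans
    (add_le_add_left (measure_union_le _ _) _))

theorem statement4_general {Ω : Type*} [MeasurableSpace Ω] (μ : Measure Ω) [IsProbabilityMeasure μ]
    (X Y : ℕ → Ω → ℝ) (U : ℝ → ℝ) (ustar : ℝ)
    (hXpos : ∀ k ω, 0 < X k ω) (hYpos : ∀ k ω, 0 < Y k ω)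
    (hXb : BddInProb μ X) (hYb : BddInProb μ Y)
    (hXinv : BddInProb μ fun k ω => (X k ω)⁻¹)
    (hYinv : BddInProb μ fun k ω => (Y k ω)⁻¹)
    (hU : StrictConcaveOn ℝ (Ioi (0 : ℝ)) U)
    (hIX : ∀ k, Integrable (fun ω => U (X k ω)) μ)
    (hIY : ∀ k, Integrable (fun ω => U (Y k ω)) μ)
    (hIM : ∀ k, Integrable (fun ω => U ((X k ω + Y k ω) / 2)) μ)
    (hmid : ∀ k, ∫ ω, U ((X k ω + Y k ω) / 2) ∂μ ≤ ustar)
    (hX : Tendsto (fun k => ∫ ω, U (X k ω) ∂μ) atTop (𝓝 ustar))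
    (hY : Tendsto (fun k => ∫ ω, U (Y k ω) ∂μ) atTop (𝓝 ustar)) :
    TendstoInMeasure μ (fun k ω => |X k ω - Y k ω|) atTop (fun _ => (0 : ℝ)) := by
  have hgap : ∀ k, 0 ≤ᵐ[μ] fun ω => midpointGap U (X k ω) (Y k ω) := fun k =>
    .of_forall fun ω => hU.concaveOn.midpointGap_nonneg (hXpos k ω) (hYpos k ω)
  have hgap_lim := tendsto_integral_midpointGap hgap hIX hIY hIM hmid hX hY
  refine tendstoInMeasure_iff_norm.2 fun ε hε => ?_
  simp only [sub_zero, Real.norm_eq_abs, abs_abs]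
  refine ENNReal.tendsto_nhds_zero.2 fun d hd => ?_
  have hd3 : 0 < d / 3 := ENNReal.div_pos hd.ne' ENNReal.ofNat_ne_top
  obtain ⟨M, hM, hXM, hYM⟩ := ((eventually_gt_atTop 0).and
    ((hXb.eventually_measure_notMem_Icc_le hXinv hXpos hd3).and
      (hYb.eventually_measure_notMem_Icc_le hYinv hYpos hd3))).exists
  obtain ⟨η, hη, hηgap⟩ := hU.exists_pos_le_midpointGap (K := Icc M⁻¹ M) isOpen_Ioi
    isCompact_Icc (fun x hx => (inv_pos.2 hM).trans_le hx.1) hε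
  filter_upwards [ENNReal.tendsto_nhds_zero.1 (tendsto_measure_le_of_tendsto_integral hgap
    (fun k => (hIM k).sub (((hIX k).add (hIY k)).div_const 2)) hgap_lim hη) _ hd3] with k hk
  calc μ {ω | ε ≤ |X k ω - Y k ω|}
      ≤ μ {ω | η ≤ midpointGap U (X k ω) (Y k ω)} + μ {ω | X k ω ∉ Icc M⁻¹ M} +
        μ {ω | Y k ω ∉ Icc M⁻¹ M} := measure_le_abs_sub_le_add μ hηgap (X k) (Y k)
    _ ≤ d / 3 + d / 3 + d / 3 := add_le_add (add_le_add hk (hXM k)) (hYM k)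
    _ = d := ENNReal.add_thirds d

/-- two optimizing sequences for a strictly concave utility merge in
probability, provided they and their reciprocals are bounded in probability. -/
theorem statement4 {Ω : Type*} [MeasurableSpace Ω] (μ : Measure Ω) [IsProbabilityMeasure μ]
    (X Y : ℕ → Ω → ℝ) (U : ℝ → ℝ) (ustar : ℝ)
    (hXmeas : ∀ k, AEMeasurable (X k) μ) (hYmeas : ∀ k, AEMeasurable (Y k) μ)
    (hXpos : ∀ k ω, 0 < X k ω) (hYpos : ∀ k ω, 0 < Y k ω)
    (hXb : BddInProb μ X) (hYb : BddInProb μ Y)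
    (hXinv : BddInProb μ fun k ω => (X k ω)⁻¹)
    (hYinv : BddInProb μ fun k ω => (Y k ω)⁻¹)
    (hU : StrictConcaveOn ℝ (Ioi (0 : ℝ)) U)
    (hIX : ∀ k, Integrable (fun ω => U (X k ω)) μ)
    (hIY : ∀ k, Integrable (fun ω => U (Y k ω)) μ)
    (hIM : ∀ k, Integrable (fun ω => U ((X k ω + Y k ω) / 2)) μ)
    (hmid : ∀ k, ∫ ω, U ((X k ω + Y k ω) / 2) ∂μ ≤ ustar)
    (hX : Tendsto (fun k => ∫ ω, U (X k ω) ∂μ) atTop (𝓝 ustar))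
    (hY : Tendsto (fun k => ∫ ω, U (Y k ω) ∂μ) atTop (𝓝 ustar)) :
    TendstoInMeasure μ (fun k ω => |X k ω - Y k ω|) atTop (fun _ => (0 : ℝ)) :=
  statement4_general μ X Y U ustar hXpos hYpos hXb hYb hXinv hYinv hU hIX hIY hIM hmid hX hY
end

section
/- Let $U:(0,\infty) \to \mathbb{R}$ be increasing and concave, extended by $U(0) := \lim_{x \downarrow 0} U(x) \in [-\infty, \infty)$. Let $u_s(x) := \sup_{X \in \mathcal{X}_s(x)} \mathbb{E}[U(X_T)]$ and $u(x) := \sup_{X \in \mathcal{X}(x)} \mathbb{E}[U(X_T)]$ where $\mathcal{X}_s(x) \subseteq \mathcal{X}(x)$. Assume: (i) $u$ is continuous on $(0,\infty)$ (e.g., finite and concave); (ii) for every $x > 0$, $\epsilon \in (0,x)$, and $X \in \mathcal{X}(x)$ with $X \geq \epsilon$, there exists a sequence $X^k \in \mathcal{X}_s(x)$ with $X^k_T \geq \epsilon$ and $X^k_T \to X_T$ in probability; (iii) $\xi \in \mathcal{X}(x-\epsilon)$ implies $\epsilon + \xi \in \mathcal{X}(x)$. Then $u_s(x) = u(x)$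 for all $x > 0$. -/
/-!
Shifting a wealth `ξ ∈ 𝒳(x - ε)` by the cash amount `ε` gives `ε + ξ ∈ 𝒳(x)`, which is bounded
below by `ε` and hence approximable in probability by simple wealths `Xᵏ ∈ 𝒳ₛ(x)`. Wherever
`|Xᵏ - (ε + ξ)| < ε` we have `Xᵏ > ξ`, so `U(Xᵏ) ≥ U(ξ)`; the exceptional sets have vanishing
measure, so `E[U(ξ)] ≤ uₛ(x)`. Thus `u(x - ε) ≤ uₛ(x)`, and letting `ε ↓ 0` with the continuity
of `u` gives `u(x) ≤ uₛ(x)`.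
-/

open MeasureTheory Filter Set
open scoped Topology ENNReal

namespace MeasureTheory

variable {Ω : Type*} [MeasurableSpace Ω] {μ : Measure Ω}

theorem lintegral_le_lintegral_add_mul_measure {f g : Ω → ℝ≥0∞} {s : Set Ω} {b : ℝ≥0∞}
    (hfb : ∀ ω, f ω ≤ b) (hfg : ∀ᵐ ω ∂μ, ω ∉ s → f ω ≤ g ω) :
    ∫⁻ ω, f ω ∂μ ≤ ∫⁻ ω, g ω ∂μ + b * μ s := by
  set t := toMeasurable μ s
  have ht : MeasurableSet t := measurableSet_toMeasurable μ s
  have hle : ∀ᵐ ω ∂μ, f ω ≤ g ω + t.indicator (fun _ => b) ω := by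
    filter_upwards [hfg] with ω hω
    by_cases hωt : ω ∈ t
    · simpa [indicator_of_mem hωt] using le_add_left (hfb ω)
    · simpa [indicator_of_notMem hωt] using hω fun hωs => hωt (subset_toMeasurable μ s hωs)
  calc ∫⁻ ω, f ω ∂μ ≤ ∫⁻ ω, g ω + t.indicator (fun _ => b) ω ∂μ := lintegral_mono_ae hle
    _ = ∫⁻ ω, g ω ∂μ + b * μ s := by
      rw [lintegral_add_right _ (measurable_const.indicator ht), lintegral_indicator_const ht,
        measure_toMeasurable]

/-- A simple function `φ ≤ f` is bounded by some `b < ∞` since `f` is finite, so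
`∫⁻ φ ≤ ∫⁻ g k + b * μ (s k)`. -/
theorem lintegral_le_of_ae_le_off_measure_tendsto_zero {ι : Type*} {l : Filter ι} [l.NeBot]
    {f : Ω → ℝ≥0∞} {g : ι → Ω → ℝ≥0∞} {s : ι → Set Ω} {c : ℝ≥0∞}
    (hf : ∀ ω, f ω ≠ ∞) (hs : Tendsto (fun k => μ (s k)) l (𝓝 0))
    (hfg : ∀ k, ∀ᵐ ω ∂μ, ω ∉ s k → f ω ≤ g k ω) (hg : ∀ k, ∫⁻ ω, g k ω ∂μ ≤ c) :
    ∫⁻ ω, f ω ∂μ ≤ c := by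
  rw [lintegral_def]
  refine iSup₂_le fun φ hφ => ?_
  set b := φ.range.sup id
  have hφb : ∀ ω, φ ω ≤ b := fun ω => Finset.le_sup (f := id) (φ.mem_range_self ω)
  have hb : b ≠ ∞ := by
    refine ((Finset.sup_lt_iff bot_lt_top).2 fun y hy => ?_).ne
    obtain ⟨ω, rfl⟩ := SimpleFunc.mem_range.1 hy
    exact (hφ ω).trans_lt (hf ω).lt_top
  have hbound : ∀ k, φ.lintegral μ ≤ c + b * μ (s k) := fun k =>
    calc φ.lintegral μ = ∫⁻ ω, φ ω ∂μ := (φ.lintegral_eq_lintegral μ).symm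
      _ ≤ ∫⁻ ω, g k ω ∂μ + b * μ (s k) :=
        lintegral_le_lintegral_add_mul_measure hφb
          ((hfg k).mono fun ω h hω => (hφ ω).trans (h hω))
      _ ≤ c + b * μ (s k) := by gcongr; exact hg k
  have hlim : Tendsto (fun k => c + b * μ (s k)) l (𝓝 c) := by
    simpa using tendsto_const_nhds.add (ENNReal.Tendsto.const_mul hs (Or.inr hb))
  exact ge_of_tendsto' hlim hbound

theorem lintegral_utility_le_of_tendstoInMeasure_shift {ι : Type*} {l : Filter ι} [l.NeBot]
    {U : ℝ → ℝ} (hU : MonotoneOn U (Ici 0)) {ε : ℝ} (hε : 0 < ε) {ξ : Ω → ℝ}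
    (hξ : ∀ᵐ ω ∂μ, 0 ≤ ξ ω) {X : ι → Ω → ℝ}
    (hX : TendstoInMeasure μ X l fun ω => ε + ξ ω) {c : ℝ≥0∞}
    (hc : ∀ k, ∫⁻ ω, ENNReal.ofReal (U (X k ω) - U 0) ∂μ ≤ c) :
    ∫⁻ ω, ENNReal.ofReal (U (ξ ω) - U 0) ∂μ ≤ c := by
  refine lintegral_le_of_ae_le_off_measure_tendsto_zero (fun _ => ENNReal.ofReal_ne_top)
    (hX _ (ENNReal.ofReal_pos.2 hε)) (fun k => ?_) hc
  filter_upwards [hξ] with ω hξω hclose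
  have hdist : |X k ω - (ε + ξ ω)| < ε := by
    simpa [edist_lt_ofReal, Real.dist_eq] using hclose
  have hξX : ξ ω ≤ X k ω := by linarith [(abs_lt.1 hdist).1]
  gcongr
  exact hU hξω (hξω.trans hξX) hξX

end MeasureTheory

theorem statement13_general
    {Ω : Type*} [MeasurableSpace Ω] (μ : Measure Ω)
    (U : ℝ → ℝ) (hUmono : MonotoneOn U (Ici (0 : ℝ)))
    (𝒳s 𝒳 : ℝ → Set (Ω → ℝ))
    (hsub : ∀ x, 𝒳s x ⊆ 𝒳 x)
    (hnn : ∀ x : ℝ, ∀ X ∈ 𝒳 x, ∀ᵐ ω ∂μ, 0 ≤ X ω)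
    (us u : ℝ → ℝ≥0∞)
    (hus : ∀ x : ℝ, us x = ⨆ X ∈ 𝒳s x, ∫⁻ ω, ENNReal.ofReal (U (X ω) - U 0) ∂μ)
    (hu : ∀ x : ℝ, u x = ⨆ X ∈ 𝒳 x, ∫⁻ ω, ENNReal.ofReal (U (X ω) - U 0) ∂μ)
    -- (i) continuity of the indirect utility
    (hcont : ContinuousOn u (Ioi (0 : ℝ)))
    -- (ii) density of simply-attainable wealths
    (happrox : ∀ x ε : ℝ, 0 < ε → ε < x → ∀ X ∈ 𝒳 x, (∀ᵐ ω ∂μ, ε ≤ X ω) →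
      ∃ Xk : ℕ → Ω → ℝ, (∀ k, Xk k ∈ 𝒳s x) ∧ (∀ k, ∀ᵐ ω ∂μ, ε ≤ Xk k ω) ∧
        TendstoInMeasure μ Xk atTop X)
    -- (iii) shifting wealth by holding extra cash
    (hshift : ∀ x ε : ℝ, 0 < ε → ε < x → ∀ ξ ∈ 𝒳 (x - ε), (fun ω => ε + ξ ω) ∈ 𝒳 x) :
    ∀ x : ℝ, 0 < x → us x = u x := by
  intro x hx
  have hus_le : us x ≤ u x := by
    rw [hus, hu]
    exact iSup₂_le fun X hX => le_iSup₂_of_le X (hsub x hX) le_rfl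
  have hshifted : ∀ ε, 0 < ε → ε < x → u (x - ε) ≤ us x := by
    intro ε hε hεx
    rw [hu]
    refine iSup₂_le fun ξ hξ => ?_
    have hξ0 := hnn _ ξ hξ
    obtain ⟨Xk, hXk, -, hconv⟩ := happrox x ε hε hεx _ (hshift x ε hε hεx ξ hξ)
      (hξ0.mono fun ω h => by linarith)
    refine lintegral_utility_le_of_tendstoInMeasure_shift hUmono hε hξ0 hconv fun k => ?_
    rw [hus]
    exact le_iSup₂_of_le (Xk k) (hXk k) le_rfl
  have hleft : Tendsto u (𝓝[<] x) (𝓝 (u x)) :=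
    ((hcont x hx).continuousAt (Ioi_mem_nhds hx)).tendsto.mono_left nhdsWithin_le_nhds
  refine hus_le.antisymm (le_of_tendsto hleft ?_)
  filter_upwards [Ioo_mem_nhdsLT hx] with y hy
  simpa using hshifted (x - y) (by linarith [hy.2]) (by linarith [hy.1])

/-- if wealths attainable by simple trading are dense (in the sense (ii)) in
all attainable wealths, then the two indirect utilities coincide: `u_s = u` on `(0,∞)`. -/
theorem statement13
    {Ω : Type*} [MeasurableSpace Ω] (μ : Measure Ω) [IsProbabilityMeasure μ]
    (U : ℝ → ℝ) (hUconc : ConcaveOn ℝ (Ici (0 : ℝ)) U) (hUmono : MonotoneOn U (Ici (0 : ℝ)))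
    (𝒳s 𝒳 : ℝ → Set (Ω → ℝ))
    (hsub : ∀ x, 𝒳s x ⊆ 𝒳 x)
    (hnn : ∀ x : ℝ, ∀ X ∈ 𝒳 x, ∀ᵐ ω ∂μ, 0 ≤ X ω)
    (us u : ℝ → ℝ≥0∞)
    (hus : ∀ x : ℝ, us x = ⨆ X ∈ 𝒳s x, ∫⁻ ω, ENNReal.ofReal (U (X ω) - U 0) ∂μ)
    (hu : ∀ x : ℝ, u x = ⨆ X ∈ 𝒳 x, ∫⁻ ω, ENNReal.ofReal (U (X ω) - U 0) ∂μ)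
    -- (i) continuity of the indirect utility
    (hcont : ContinuousOn u (Ioi (0 : ℝ)))
    -- (ii) density of simply-attainable wealths
    (happrox : ∀ x ε : ℝ, 0 < ε → ε < x → ∀ X ∈ 𝒳 x, (∀ᵐ ω ∂μ, ε ≤ X ω) →
      ∃ Xk : ℕ → Ω → ℝ, (∀ k, Xk k ∈ 𝒳s x) ∧ (∀ k, ∀ᵐ ω ∂μ, ε ≤ Xk k ω) ∧
        TendstoInMeasure μ Xk atTop X)
    -- (iii) shifting wealth by holding extra cash
    (hshift : ∀ x ε : ℝ, 0 < ε → ε < x → ∀ ξ ∈ 𝒳 (x - ε), (fun ω => ε + ξ ω) ∈ 𝒳 x) :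
    ∀ x : ℝ, 0 < x → us x = u x :=
  statement13_general μ U hUmono 𝒳s 𝒳 hsub hnn us u hus hu hcont happrox hshift
end

section
/- Let $u : (0,\infty) \to \mathbb{R}$ be finite, concave (hence continuous), and suppose the wealth classes satisfy: $\mathcal{X}(a) + \mathcal{X}(b) \subseteq \mathcal{X}(a+b)$ for all $a, b > 0$. Assume there exist a nonnegative random variable $\xi$ with $\mathbb{P}[\xi > 0] > 0$, and for each $n \in \mathbb{N}$ some $X^n \in \mathcal{X}(1/n)$ with $X^n_T \geq \xi$ a.s. (an arbitrage of the first kind), together with $\bar{X} \in \mathcal{X}(x)$ with $\bar{X}_T > 0$ a.s. and $\mathbb{E}[U(\bar{X}_T)] = u(x)$ for a strictly increasing utility $U$. Then a contradiction follows; that is, existence of a strictly positive optimizer with finite value forces absence of arbitrages of the first kind. -/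
/-!
Adding the arbitrage `Xⁿ ∈ 𝒳(1/n)` to the optimizer `X̄ ∈ 𝒳(x)` gives `X̄ + Xⁿ ∈ 𝒳(x + 1/n)`,
whose expected utility dominates `J := E[U(X̄_T + ξ)]`, which exceeds `u(x) = E[U(X̄_T)]` strictly
because `U` is strictly increasing and `ξ > 0` with positive probability. So `J ≤ u(x + 1/n)`
for all `n`. Concavity on the chord from `x/2` to `y > x` gives `(x/2)/(y - x/2) · u(y) ≤ u(x)`,
and the coefficient tends to `1` as `y ↓ x`; hence `J ≤ u(x) < J`.
-/

open MeasureTheory Filter Set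
open scoped Topology ENNReal

/-- The indirect utility `u(y) = sup_{X ∈ 𝒳(y)} E[U(X_T)]` (in the extended sense, after
normalizing by `U(0)`). -/
noncomputable def indirectU {Ω : Type*} [MeasurableSpace Ω] (μ : Measure Ω) (U : ℝ → ℝ)
    (𝒳 : ℝ → Set (Ω → ℝ)) (y : ℝ) : ℝ≥0∞ :=
  ⨆ X ∈ 𝒳 y, ∫⁻ ω, ENNReal.ofReal (U (X ω) - U 0) ∂μ

/-- Concavity on `(0, ∞)` of an `ℝ≥0∞`-valued function; Mathlib's `ConcaveOn` does not apply
since `ℝ≥0∞` is not an `ℝ`-module. -/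
def ENNRealConcaveOnPos (v : ℝ → ℝ≥0∞) : Prop :=
  ∀ a b lam : ℝ, 0 < a → 0 < b → 0 ≤ lam → lam ≤ 1 →
    ENNReal.ofReal lam * v a + ENNReal.ofReal (1 - lam) * v b ≤ v (lam * a + (1 - lam) * b)

namespace ENNRealConcaveOnPos

variable {v : ℝ → ℝ≥0∞}

theorem ofReal_mul_le (hv : ENNRealConcaveOnPos v) {a x b : ℝ} (ha : 0 < a) (hax : a < x)
    (hxb : x ≤ b) : ENNReal.ofReal ((x - a) / (b - a)) * v b ≤ v x := by
  have hab : 0 < b - a := by linarith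
  have hlam0 : 0 ≤ (b - x) / (b - a) := div_nonneg (by linarith) hab.le
  have hlam1 : (b - x) / (b - a) ≤ 1 := (div_le_one hab).2 (by linarith)
  have hcoef : 1 - (b - x) / (b - a) = (x - a) / (b - a) := by field_simp; ring
  have hmix : (b - x) / (b - a) * a + (1 - (b - x) / (b - a)) * b = x := by field_simp; ring
  have := hv a b _ ha (by linarith) hlam0 hlam1
  rw [hmix, hcoef] at this
  exact le_add_self.trans this

theorem le_of_tendsto {ι : Type*} {l : Filter ι} [l.NeBot] (hv : ENNRealConcaveOnPos v)
    {x : ℝ} (hx : 0 < x) {b : ι → ℝ} (hxb : ∀ i, x ≤ b i) (hb : Tendsto b l (𝓝 x))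
    {J : ℝ≥0∞} (hJ : ∀ i, J ≤ v (b i)) : J ≤ v x := by
  have hcoef : Tendsto (fun i => (x - x / 2) / (b i - x / 2)) l (𝓝 1) := by
    have := (tendsto_const_nhds (x := x - x / 2)).div (hb.sub_const (x / 2)) (by linarith)
    rwa [div_self (by linarith)] at this
  have hlim : Tendsto (fun i => ENNReal.ofReal ((x - x / 2) / (b i - x / 2)) * J) l (𝓝 J) := by
    simpa using ENNReal.Tendsto.mul_const (ENNReal.tendsto_ofReal hcoef) (Or.inl (by simp))
  refine le_of_tendsto' hlim fun i => ?_
  exact (mul_le_mul_right (hJ i) _).trans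
    (hv.ofReal_mul_le (half_pos hx) (half_lt_self hx) (hxb i))

end ENNRealConcaveOnPos

section ExpectedUtility

variable {Ω : Type*} [MeasurableSpace Ω] {μ : Measure Ω} {U : ℝ → ℝ}

theorem lintegral_ofReal_sub_mono (hU : MonotoneOn U (Ici 0)) (c : ℝ) {X Y : Ω → ℝ}
    (hX : ∀ ω, 0 ≤ X ω) (hXY : X ≤ᵐ[μ] Y) :
    ∫⁻ ω, ENNReal.ofReal (U (X ω) - c) ∂μ ≤ ∫⁻ ω, ENNReal.ofReal (U (Y ω) - c) ∂μ := by
  refine lintegral_mono_ae ?_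
  filter_upwards [hXY] with ω hω
  exact ENNReal.ofReal_le_ofReal
    (sub_le_sub_right (hU (hX ω) ((hX ω).trans hω) hω) c)

theorem lintegral_ofReal_sub_lt_add (hU : StrictMonoOn U (Ici 0)) (hUm : Measurable U)
    {X ξ : Ω → ℝ} (hX : ∀ ω, 0 ≤ X ω) (hXm : Measurable X) (hξ : ∀ ω, 0 ≤ ξ ω)
    (hξm : Measurable ξ) (hξpos : 0 < μ {ω | 0 < ξ ω})
    (hfin : ∫⁻ ω, ENNReal.ofReal (U (X ω) - U 0) ∂μ ≠ ⊤) :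
    ∫⁻ ω, ENNReal.ofReal (U (X ω) - U 0) ∂μ < ∫⁻ ω, ENNReal.ofReal (U (X ω + ξ ω) - U 0) ∂μ := by
  have hmono : ∀ ω, U (X ω) ≤ U (X ω + ξ ω) := fun ω =>
    hU.monotoneOn (hX ω) (add_nonneg (hX ω) (hξ ω)) (le_add_of_nonneg_right (hξ ω))
  have hsplit : ∀ ω, ENNReal.ofReal (U (X ω + ξ ω) - U 0)
      = ENNReal.ofReal (U (X ω) - U 0) + ENNReal.ofReal (U (X ω + ξ ω) - U (X ω)) := by
    intro ω
    rw [← ENNReal.ofReal_add (sub_nonneg.2 (hU.monotoneOn (mem_Ici.2 le_rfl) (hX ω) (hX ω)))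
      (sub_nonneg.2 (hmono ω))]
    ring_nf
  have hgain : 0 < ∫⁻ ω, ENNReal.ofReal (U (X ω + ξ ω) - U (X ω)) ∂μ := by
    rw [lintegral_pos_iff_support (by fun_prop)]
    refine hξpos.trans_le (measure_mono fun ω hω => ?_)
    exact (ENNReal.ofReal_pos.2 (sub_pos.2 (hU (hX ω) (add_nonneg (hX ω) (hξ ω))
      (lt_add_of_pos_right _ hω)))).ne'
  rw [lintegral_congr hsplit, lintegral_add_left (by fun_prop)]
  exact ENNReal.lt_add_right hfin hgain.ne'

theorem le_indirectU {𝒳 : ℝ → Set (Ω → ℝ)} {y : ℝ} {X : Ω → ℝ} (hX : X ∈ 𝒳 y) :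
    ∫⁻ ω, ENNReal.ofReal (U (X ω) - U 0) ∂μ ≤ indirectU μ U 𝒳 y :=
  le_iSup₂ (f := fun X (_ : X ∈ 𝒳 y) => ∫⁻ ω, ENNReal.ofReal (U (X ω) - U 0) ∂μ) X hX

end ExpectedUtility

theorem statement17_general
    {Ω : Type*} [MeasurableSpace Ω] (μ : Measure Ω)
    (U : ℝ → ℝ) (hUmono : StrictMonoOn U (Ici (0 : ℝ))) (hUmeas : Measurable U)
    (𝒳 : ℝ → Set (Ω → ℝ))
    (hnn : ∀ y : ℝ, ∀ X ∈ 𝒳 y, ∀ ω, 0 ≤ X ω)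
    (hadd : ∀ a b : ℝ, ∀ X ∈ 𝒳 a, ∀ Y ∈ 𝒳 b, (fun ω => X ω + Y ω) ∈ 𝒳 (a + b))
    -- `u` is finite and concave on `(0,∞)`
    (hfin : ∀ y : ℝ, 0 < y → indirectU μ U 𝒳 y < ⊤)
    (hconc : ∀ a b lam : ℝ, 0 < a → 0 < b → 0 ≤ lam → lam ≤ 1 →
      ENNReal.ofReal lam * indirectU μ U 𝒳 a
          + ENNReal.ofReal (1 - lam) * indirectU μ U 𝒳 b
        ≤ indirectU μ U 𝒳 (lam * a + (1 - lam) * b))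
    (x : ℝ) (hx : 0 < x)
    -- an arbitrage of the first kind
    (ξ : Ω → ℝ) (hξnn : ∀ ω, 0 ≤ ξ ω) (hξmeas : Measurable ξ)
    (hξpos : 0 < μ {ω | 0 < ξ ω})
    (Xn : ℕ → Ω → ℝ) (hXn : ∀ n : ℕ, Xn n ∈ 𝒳 (1 / (n + 1)))
    (hXnξ : ∀ n : ℕ, ∀ᵐ ω ∂μ, ξ ω ≤ Xn n ω)
    -- a strictly positive optimizer at `x`
    (Xb : Ω → ℝ) (hXb : Xb ∈ 𝒳 x) (hXbmeas : Measurable Xb)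
    (hopt : ∫⁻ ω, ENNReal.ofReal (U (Xb ω) - U 0) ∂μ = indirectU μ U 𝒳 x) :
    False := by
  have hXbnn : ∀ ω, 0 ≤ Xb ω := hnn x Xb hXb
  have hgain : indirectU μ U 𝒳 x < ∫⁻ ω, ENNReal.ofReal (U (Xb ω + ξ ω) - U 0) ∂μ := by
    rw [← hopt]
    exact lintegral_ofReal_sub_lt_add hUmono hUmeas hXbnn hXbmeas hξnn hξmeas hξpos
      (hopt ▸ (hfin x hx).ne)
  have hdom : ∀ n : ℕ, ∫⁻ ω, ENNReal.ofReal (U (Xb ω + ξ ω) - U 0) ∂μ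
      ≤ indirectU μ U 𝒳 (x + 1 / (n + 1)) := fun n =>
    (lintegral_ofReal_sub_mono hUmono.monotoneOn (U 0) (fun ω => add_nonneg (hXbnn ω) (hξnn ω))
      (by filter_upwards [hXnξ n] with ω hω using add_le_add_right hω _)).trans
      (le_indirectU (hadd _ _ _ hXb _ (hXn n)))
  have hlim : Tendsto (fun n : ℕ => x + 1 / ((n : ℝ) + 1)) atTop (𝓝 x) := by
    simpa using tendsto_one_div_add_atTop_nhds_zero_nat.const_add x
  exact (hgain.trans_le (ENNRealConcaveOnPos.le_of_tendsto hconc hx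
    (fun n => le_add_of_nonneg_right (by positivity)) hlim hdom)).false

/-- a strictly positive optimizer with finite concave value function is
incompatible with the existence of an arbitrage of the first kind. -/
theorem statement17
    {Ω : Type*} [MeasurableSpace Ω] (μ : Measure Ω) [IsProbabilityMeasure μ]
    (U : ℝ → ℝ) (hUmono : StrictMonoOn U (Ici (0 : ℝ))) (hUmeas : Measurable U)
    (𝒳 : ℝ → Set (Ω → ℝ))
    (hnn : ∀ y : ℝ, ∀ X ∈ 𝒳 y, ∀ ω, 0 ≤ X ω)
    (hadd : ∀ a b : ℝ, ∀ X ∈ 𝒳 a, ∀ Y ∈ 𝒳 b, (fun ω => X ω + Y ω) ∈ 𝒳 (a + b))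
    -- `u` is finite and concave on `(0,∞)`
    (hfin : ∀ y : ℝ, 0 < y → indirectU μ U 𝒳 y < ⊤)
    (hconc : ∀ a b lam : ℝ, 0 < a → 0 < b → 0 ≤ lam → lam ≤ 1 →
      ENNReal.ofReal lam * indirectU μ U 𝒳 a
          + ENNReal.ofReal (1 - lam) * indirectU μ U 𝒳 b
        ≤ indirectU μ U 𝒳 (lam * a + (1 - lam) * b))
    (x : ℝ) (hx : 0 < x)
    -- an arbitrage of the first kind
    (ξ : Ω → ℝ) (hξnn : ∀ ω, 0 ≤ ξ ω) (hξmeas : Measurable ξ)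
    (hξpos : 0 < μ {ω | 0 < ξ ω})
    (Xn : ℕ → Ω → ℝ) (hXn : ∀ n : ℕ, Xn n ∈ 𝒳 (1 / (n + 1)))
    (hXnξ : ∀ n : ℕ, ∀ᵐ ω ∂μ, ξ ω ≤ Xn n ω)
    -- a strictly positive optimizer at `x`
    (Xb : Ω → ℝ) (hXb : Xb ∈ 𝒳 x) (hXbmeas : Measurable Xb) (hXbpos : ∀ᵐ ω ∂μ, 0 < Xb ω)
    (hopt : ∫⁻ ω, ENNReal.ofReal (U (Xb ω) - U 0) ∂μ = indirectU μ U 𝒳 x) :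
    False :=
  statement17_general μ U hUmono hUmeas 𝒳 hnn hadd hfin hconc x hx ξ hξnn hξmeas hξpos Xn hXn hXnξ
    Xb hXb hXbmeas hopt
end
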